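/- arXiv:1301.0193 — 5 statements merged into one kernel-verified Lean document; each statement's English description precedes it below -/
import Mathlib

section
/- Let C be a finite category in which every endomorphism is an isomorphism (a finite EI-category). Then C admits a weighting and a coweighting that are constant on isomorphism classes of objects, and these are unique among weightings/coweightings constant on isomorphism classes. -/
open scoped Classical

open CategoryTheory

section AuxForWeighting

/-- The isomorphism setoid on objects of a category. -/
def isoSetoid (C : Type) [SmallCategory C] : Setoid C :=
  ⟨fun a b => Nonempty (a ≅ b),
    ⟨fun a => ⟨Iso.refl a⟩, fun ⟨e⟩ => ⟨e.symm⟩, fun ⟨e⟩ ⟨f⟩ => ⟨e.trans f⟩⟩⟩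

variable (C : Type) [SmallCategory C]

/-- Isomorphism classes. -/
def IsoQ : Type := Quotient (isoSetoid C)

noncomputable instance [Fintype C] : Fintype (IsoQ C) := Quotient.fintype _

variable {C}

abbrev qmk (a : C) : IsoQ C := Quotient.mk (isoSetoid C) a

theorem card_hom_congr {a a' b : C} (e : a ≅ a') :
    (Nat.card (a ⟶ b) : ℚ) = Nat.card (a' ⟶ b) :=
  congrArg (fun n : ℕ => (n : ℚ)) (Nat.card_congr (e.homCongr (Iso.refl b)))

theorem card_hom_congr' {a b b' : C} (e : b ≅ b') :
    (Nat.card (a ⟶ b) : ℚ) = Nat.card (a ⟶ b') :=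
  congrArg (fun n : ℕ => (n : ℚ)) (Nat.card_congr ((Iso.refl a).homCongr e))

/-- The hom-order on iso classes. -/
def qle : IsoQ C → IsoQ C → Prop :=
  Quotient.lift₂ (fun a b => Nonempty (a ⟶ b)) (by
    rintro a b a' b' ⟨e⟩ ⟨f⟩
    exact propext ⟨fun ⟨g⟩ => ⟨e.inv ≫ g ≫ f.hom⟩, fun ⟨g⟩ => ⟨e.hom ≫ g ≫ f.inv⟩⟩)

theorem qle_mk {a b : C} : qle (qmk a) (qmk b) ↔ Nonempty (a ⟶ b) := Iff.rfl

theorem qle_refl (q : IsoQ C) : qle q q := by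
  induction q using Quotient.ind
  exact ⟨𝟙 _⟩

theorem qle_trans {q r t : IsoQ C} (h1 : qle q r) (h2 : qle r t) : qle q t := by
  induction q using Quotient.ind
  induction r using Quotient.ind
  induction t using Quotient.ind
  obtain ⟨f⟩ := h1; obtain ⟨g⟩ := h2
  exact ⟨f ≫ g⟩

theorem qle_antisymm (hEI : ∀ (a : C) (f : a ⟶ a), IsIso f) {q r : IsoQ C}
    (h1 : qle q r) (h2 : qle r q) : q = r := by
  induction q using Quotient.ind with | _ a =>
  induction r using Quotient.ind with | _ b =>
  obtain ⟨f⟩ := h1; obtain ⟨g⟩ := h2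
  haveI : IsIso (f ≫ g) := hEI a _
  haveI : IsIso (g ≫ f) := hEI b _
  refine Quotient.sound ⟨⟨f, g ≫ CategoryTheory.inv (f ≫ g), ?_, ?_⟩⟩
  · rw [← Category.assoc, IsIso.hom_inv_id]
  · rw [← cancel_epi (g ≫ f)]
    simp only [Category.assoc, Category.comp_id]
    rw [← Category.assoc f g, IsIso.hom_inv_id_assoc]

/-- strict hom order -/
def qlt (q r : IsoQ C) : Prop := qle q r ∧ q ≠ r

theorem qlt_wf (hEI : ∀ (a : C) (f : a ⟶ a), IsIso f) [Fintype C] :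
    WellFounded (qlt (C := C)) := by
  letI : IsTrans (IsoQ C) qlt :=
    ⟨fun a b c h1 h2 => ⟨qle_trans h1.1 h2.1, fun hac => h1.2 (by
      subst hac
      exact (qle_antisymm hEI h1.1 h2.1).symm ▸ rfl)⟩⟩
  letI : IsIrrefl (IsoQ C) qlt := ⟨fun a h => h.2 rfl⟩
  exact Finite.wellFounded_of_trans_of_irrefl _

theorem qgt_wf (hEI : ∀ (a : C) (f : a ⟶ a), IsIso f) [Fintype C] :
    WellFounded (fun q r : IsoQ C => qlt r q) := by
  letI : IsTrans (IsoQ C) (fun q r : IsoQ C => qlt r q) :=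
    ⟨fun a b c h1 h2 => ⟨qle_trans h2.1 h1.1, fun hac => h1.2 (by
      subst hac
      exact qle_antisymm hEI h1.1 h2.1)⟩⟩
  letI : IsIrrefl (IsoQ C) (fun q r : IsoQ C => qlt r q) := ⟨fun a h => h.2 rfl⟩
  exact Finite.wellFounded_of_trans_of_irrefl _

/-- Generic triangular-matrix solving lemma. -/
theorem matrix_unique_solve {Q : Type} [Fintype Q] (M : Q → Q → ℚ)
    (rel : Q → Q → Prop) (hwf : WellFounded rel)
    (hdiag : ∀ q, M q q ≠ 0)
    (htri : ∀ q r, M q r ≠ 0 → r ≠ q → rel r q) :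
    ∃! w : Q → ℚ, ∀ q, ∑ r, M q r * w r = 1 := by
  let T : (Q → ℚ) →ₗ[ℚ] (Q → ℚ) :=
    { toFun := fun x q => ∑ r, M q r * x r
      map_add' := by intro x y; funext q; simp [mul_add, Finset.sum_add_distrib]
      map_smul' := by
        intro c x; funext q
        simp [Finset.mul_sum, mul_left_comm] }
  have hT : ∀ x q, T x q = ∑ r, M q r * x r := fun _ _ => rfl
  have hinj : Function.Injective T := by
    rw [injective_iff_map_eq_zero]
    intro x hx
    suffices hz : ∀ q, x q = 0 by funext q; simpa using hz q
    intro q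
    induction q using WellFounded.induction hwf with | _ q IH =>
    have h0 : ∑ r, M q r * x r = 0 := by
      have := congrFun hx q; simpa [hT] using this
    have hsingle : ∑ r, M q r * x r = M q q * x q := by
      refine Finset.sum_eq_single q (fun r _ hr => ?_) (by simp)
      by_cases hM : M q r = 0
      · simp [hM]
      · rw [IH r (htri q r hM hr), mul_zero]
    rw [hsingle] at h0
    simpa using (mul_eq_zero.mp h0).resolve_left (hdiag q)
  have hsurj : Function.Surjective T := LinearMap.injective_iff_surjective.mp hinj
  obtain ⟨w, hw⟩ := hsurj (fun _ => 1)
  refine ⟨w, fun q => by simpa [hT] using congrFun hw q, fun y hy => ?_⟩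
  apply hinj
  rw [hw]
  funext q
  simpa [hT] using hy q

end AuxForWeighting

open CategoryTheory in
/-- A weighting on a finite category. -/
def IsWeighting (C : Type) [CategoryTheory.Category C] [Fintype C] (k : C → ℚ) : Prop :=
  ∀ a : C, ∑ b : C, (Nat.card (a ⟶ b) : ℚ) * k b = 1

open CategoryTheory in
/-- A coweighting on a finite category. -/
def IsCoweighting (C : Type) [CategoryTheory.Category C] [Fintype C] (k : C → ℚ) : Prop :=
  ∀ b : C, ∑ a : C, k a * (Nat.card (a ⟶ b) : ℚ) = 1

open CategoryTheory in
/-- A function on objects is constant on isomorphism classes. -/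
def ConstOnIso (C : Type) [CategoryTheory.Category C] (k : C → ℚ) : Prop :=
  ∀ a b : C, Nonempty (a ≅ b) → k a = k b

section Main

variable {C : Type} [SmallCategory C] [Fintype C] [∀ a b : C, Finite (a ⟶ b)]

theorem unique_weighting (hEI : ∀ (a : C) (f : a ⟶ a), IsIso f) :
    ∃! k : C → ℚ, IsWeighting C k ∧ ConstOnIso C k := by
  -- the matrix on iso classes
  let M : IsoQ C → IsoQ C → ℚ := fun q r =>
    Quotient.liftOn q
      (fun a => ∑ b : C, if qmk b = r then (Nat.card (a ⟶ b) : ℚ) else 0)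
      (by
        rintro a a' ⟨e⟩
        refine Finset.sum_congr rfl fun b _ => ?_
        rw [card_hom_congr e])
  have hMmk : ∀ (a : C) (r : IsoQ C),
      M (qmk a) r = ∑ b : C, if qmk b = r then (Nat.card (a ⟶ b) : ℚ) else 0 :=
    fun a r => rfl
  -- key sum identity
  have hkey : ∀ (a : C) (w : IsoQ C → ℚ),
      ∑ r, M (qmk a) r * w r = ∑ b : C, (Nat.card (a ⟶ b) : ℚ) * w (qmk b) := by
    intro a w
    simp only [hMmk, Finset.sum_mul, ite_mul, zero_mul]
    rw [Finset.sum_comm]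
    refine Finset.sum_congr rfl fun b _ => ?_
    rw [Finset.sum_ite_eq (Finset.univ) (qmk b) (fun r => (Nat.card (a ⟶ b) : ℚ) * w r)]
    simp
  have hdiag : ∀ q : IsoQ C, M q q ≠ 0 := by
    intro q
    induction q using Quotient.ind with | _ a =>
    have hpos : (0 : ℚ) < M (qmk a) (qmk a) := by
      rw [hMmk]
      refine Finset.sum_pos' (fun b _ => by positivity) ⟨a, Finset.mem_univ a, ?_⟩
      rw [if_pos rfl]
      have : Nonempty (a ⟶ a) := ⟨𝟙 a⟩
      exact_mod_cast Nat.card_pos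
    exact ne_of_gt hpos
  have htri : ∀ q r : IsoQ C, M q r ≠ 0 → r ≠ q → qlt q r := by
    intro q r hM hr
    induction q using Quotient.ind with | _ a =>
    rw [hMmk] at hM
    obtain ⟨b, _, hb⟩ := Finset.exists_ne_zero_of_sum_ne_zero hM
    by_cases hbr : qmk b = r
    · refine ⟨?_, hr.symm⟩
      rw [if_pos hbr] at hb
      have hne : Nat.card (a ⟶ b) ≠ 0 := by exact_mod_cast hb
      have := (Nat.card_ne_zero.mp hne).1
      rw [← hbr]
      exact this
    · simp [hbr] at hb
  obtain ⟨w, hw, huniq⟩ := matrix_unique_solve M (fun r q => qlt q r) (qgt_wf hEI) hdiag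
    (fun q r hM hr => htri q r hM hr)
  refine ⟨fun a => w (qmk a), ⟨?_, ?_⟩, ?_⟩
  · intro a
    rw [← hkey a w]
    exact hw (qmk a)
  · intro a b ⟨e⟩
    simp only
    congr 1
    exact Quotient.sound ⟨e⟩
  · rintro k ⟨hk, hconst⟩
    have : ∀ a b : C, (isoSetoid C).r a b → k a = k b := fun a b h => hconst a b h
    let w' : IsoQ C → ℚ := Quotient.lift k this
    have hw' : w' = w := by
      apply huniq
      intro q
      induction q using Quotient.ind with | _ a =>
      have : ∀ b : C, w' (qmk b) = k b := fun b => rfl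
      rw [hkey a w']
      simpa [this] using hk a
    funext a
    show k a = w (qmk a)
    rw [← hw']
    rfl

theorem unique_coweighting (hEI : ∀ (a : C) (f : a ⟶ a), IsIso f) :
    ∃! k : C → ℚ, IsCoweighting C k ∧ ConstOnIso C k := by
  let M : IsoQ C → IsoQ C → ℚ := fun q r =>
    Quotient.liftOn q
      (fun b => ∑ a : C, if qmk a = r then (Nat.card (a ⟶ b) : ℚ) else 0)
      (by
        rintro b b' ⟨e⟩
        refine Finset.sum_congr rfl fun a _ => ?_
        rw [card_hom_congr' e])
  have hMmk : ∀ (b : C) (r : IsoQ C),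
      M (qmk b) r = ∑ a : C, if qmk a = r then (Nat.card (a ⟶ b) : ℚ) else 0 :=
    fun b r => rfl
  have hkey : ∀ (b : C) (w : IsoQ C → ℚ),
      ∑ r, M (qmk b) r * w r = ∑ a : C, w (qmk a) * (Nat.card (a ⟶ b) : ℚ) := by
    intro b w
    simp only [hMmk, Finset.sum_mul, ite_mul, zero_mul]
    rw [Finset.sum_comm]
    refine Finset.sum_congr rfl fun a _ => ?_
    rw [Finset.sum_ite_eq (Finset.univ) (qmk a) (fun r => (Nat.card (a ⟶ b) : ℚ) * w r)]
    simp [mul_comm]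
  have hdiag : ∀ q : IsoQ C, M q q ≠ 0 := by
    intro q
    induction q using Quotient.ind with | _ b =>
    have hpos : (0 : ℚ) < M (qmk b) (qmk b) := by
      rw [hMmk]
      refine Finset.sum_pos' (fun a _ => by positivity) ⟨b, Finset.mem_univ b, ?_⟩
      rw [if_pos rfl]
      have : Nonempty (b ⟶ b) := ⟨𝟙 b⟩
      exact_mod_cast Nat.card_pos
    exact ne_of_gt hpos
  have htri : ∀ q r : IsoQ C, M q r ≠ 0 → r ≠ q → qlt r q := by
    intro q r hM hr
    induction q using Quotient.ind with | _ b =>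
    rw [hMmk] at hM
    obtain ⟨a, _, ha⟩ := Finset.exists_ne_zero_of_sum_ne_zero hM
    by_cases har : qmk a = r
    · refine ⟨?_, hr⟩
      rw [if_pos har] at ha
      have hne : Nat.card (a ⟶ b) ≠ 0 := by exact_mod_cast ha
      have := (Nat.card_ne_zero.mp hne).1
      rw [← har]
      exact this
    · simp [har] at ha
  obtain ⟨w, hw, huniq⟩ := matrix_unique_solve M qlt (qlt_wf hEI) hdiag htri
  refine ⟨fun a => w (qmk a), ⟨?_, ?_⟩, ?_⟩
  · intro b
    rw [← hkey b w]
    exact hw (qmk b)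
  · intro a b ⟨e⟩
    simp only
    congr 1
    exact Quotient.sound ⟨e⟩
  · rintro k ⟨hk, hconst⟩
    have : ∀ a b : C, (isoSetoid C).r a b → k a = k b := fun a b h => hconst a b h
    let w' : IsoQ C → ℚ := Quotient.lift k this
    have hw' : w' = w := by
      apply huniq
      intro q
      induction q using Quotient.ind with | _ b =>
      have hv : ∀ a : C, w' (qmk a) = k a := fun a => rfl
      rw [hkey b w']
      simpa [hv] using hk b
    funext a
    show k a = w (qmk a)
    rw [← hw']
    rfl

end Main

open CategoryTheory in
/-- A finite EI-category admits a unique weighting and a unique coweighting constant on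
isomorphism classes of objects. -/
theorem finite_EI_unique_weighting_coweighting (C : Type) [SmallCategory C] [Fintype C]
    [∀ a b : C, Finite (a ⟶ b)] (hEI : ∀ (a : C) (f : a ⟶ a), IsIso f) :
    (∃! k : C → ℚ, IsWeighting C k ∧ ConstOnIso C k) ∧
    (∃! k : C → ℚ, IsCoweighting C k ∧ ConstOnIso C k) := by
  exact ⟨unique_weighting hEI, unique_coweighting hEI⟩
end

section
/- Let C be a finite category admitting a weighting k^•: Ob(C) → ℚ, and let a be an object of C. Then the function assigning to each object (φ: a → b) of the coslice category a/C the value k^b is a weighting for a/C. -/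
open scoped Classical

open CategoryTheory in
/-- Homs in the coslice category are subtypes of homs in `C`. -/
def cosliceHomEquiv {C : Type} [SmallCategory C] {a : C} (φ : Under a) {c : C}
    (g : a ⟶ c) : (φ ⟶ Under.mk g) ≃ {θ : φ.right ⟶ c // φ.hom ≫ θ = g} where
  toFun m := ⟨m.right, Under.w m⟩
  invFun s := Under.homMk s.1 s.2
  left_inv m := by apply CategoryTheory.Under.UnderMorphism.ext; rfl
  right_inv s := rfl

open CategoryTheory in
/-- Objects of the coslice as a sigma type. -/
def cosliceEquiv {C : Type} [SmallCategory C] (a : C) :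
    Under a ≃ Σ c : C, (a ⟶ c) where
  toFun ψ := ⟨ψ.right, ψ.hom⟩
  invFun p := Under.mk p.2
  left_inv ψ := by
    obtain ⟨⟨⟨⟩⟩, r, h⟩ := ψ
    rfl
  right_inv p := rfl

open CategoryTheory in
/-- A weighting on a finite category `C` induces a weighting on each coslice `a/C`,
assigning to a morphism `φ : a ⟶ b` the value `k b` of the weighting at its codomain. -/
theorem coslice_weighting (C : Type) [SmallCategory C] [Fintype C]
    [∀ a b : C, Finite (a ⟶ b)] (k : C → ℚ) (hk : IsWeighting C k) (a : C)
    [Fintype (Under a)] :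
    IsWeighting (Under a) (fun f => k f.right) := by
  intro φ
  have : ∀ x : C, Fintype (a ⟶ x) := fun x => Fintype.ofFinite _
  have key : ∑ ψ : Under a, (Nat.card (φ ⟶ ψ) : ℚ) * k ψ.right
      = ∑ c : C, ∑ g : a ⟶ c, (Nat.card (φ ⟶ Under.mk g) : ℚ) * k c := by
    refine (Fintype.sum_equiv (cosliceEquiv a) _
      (fun p : Σ c : C, (a ⟶ c) => (Nat.card (φ ⟶ Under.mk p.2) : ℚ) * k p.1)
      (fun ψ => rfl)).trans ?_
    rw [← Finset.univ_sigma_univ, Finset.sum_sigma]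
  rw [key]
  have inner : ∀ c : C, ∑ g : a ⟶ c, (Nat.card (φ ⟶ Under.mk g) : ℚ)
      = (Nat.card (φ.right ⟶ c) : ℚ) := by
    intro c
    have e : (Σ g : a ⟶ c, (φ ⟶ Under.mk g)) ≃ (φ.right ⟶ c) :=
      (Equiv.sigmaCongrRight (fun g => cosliceHomEquiv φ g)).trans
        (Equiv.sigmaFiberEquiv (fun θ : φ.right ⟶ c => φ.hom ≫ θ))
    have hfin : ∀ g : a ⟶ c, Fintype (φ ⟶ Under.mk g) := fun g =>
      have : Finite (φ ⟶ Under.mk g) := Finite.of_equiv _ (cosliceHomEquiv φ g).symm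
      Fintype.ofFinite _
    have hfin2 : Fintype (φ.right ⟶ c) := Fintype.ofFinite _
    have hcard := Fintype.card_congr e
    rw [Fintype.card_sigma] at hcard
    simp only [Nat.card_eq_fintype_card, ← hcard]
    push_cast
    rfl
  calc ∑ c : C, ∑ g : a ⟶ c, (Nat.card (φ ⟶ Under.mk g) : ℚ) * k c
      = ∑ c : C, (Nat.card (φ.right ⟶ c) : ℚ) * k c := by
        refine Finset.sum_congr rfl fun c _ => ?_
        rw [← Finset.sum_mul, inner c]
    _ = 1 := hk φ.right
end

section
/- Let C be a finite EI-category with the weighting k^• constant on isomorphism classes. For every object a, k^a = -χ̃(a//C) / (|[a]| · |C(a)|), where a//C is the full subcategory of the coslice a/C on the non-isomorphisms out of a, [a] is the isomorphism class of a, and C(a) the automorphism group of a. Consequently χ(C) = Σ_{[a]} -χ̃(a//C)/|C(a)|, summing over isomorphism classes. -/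
open scoped Classical

open CategoryTheory in
/-- The Euler characteristic of a finite category: the sum of any weighting
(when one exists; all weightings have the same sum when a coweighting also exists). -/
noncomputable def catEuler (C : Type) [CategoryTheory.Category C] [Fintype C] : ℚ :=
  if h : ∃ k : C → ℚ, IsWeighting C k then ∑ a : C, h.choose a else 0

open CategoryTheory in
/-- The Euler characteristic of a finite category computed from a coweighting. -/
noncomputable def catEulerCo (C : Type) [CategoryTheory.Category C] [Fintype C] : ℚ :=
  if h : ∃ k : C → ℚ, IsCoweighting C k then ∑ a : C, h.choose a else 0

open CategoryTheory in
/-- `a//C`: the full subcategory of the coslice `a/C` on the non-isomorphisms out of `a`. -/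
abbrev NonIsoUnder (C : Type) [SmallCategory C] (a : C) : Type :=
  ObjectProperty.FullSubcategory (fun f : Under a => ¬ IsIso f.hom)


open CategoryTheory
set_option linter.unusedSectionVars false
set_option linter.unnecessarySimpa false
set_option maxHeartbeats 1000000

section EIBasic
variable {D : Type} [SmallCategory D]

lemma isIso_of_hom_back (hEI : ∀ (x : D) (f : x ⟶ x), IsIso f)
    {x b : D} (f : x ⟶ b) (e : b ⟶ x) : IsIso f := by
  have hu : IsIso (f ≫ e) := hEI x _
  refine ⟨e ≫ inv (f ≫ e), ?_, ?_⟩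
  · rw [← Category.assoc, IsIso.hom_inv_id]
  · set g := e ≫ inv (f ≫ e) with hg
    have hfg : f ≫ g = 𝟙 x := by rw [hg, ← Category.assoc, IsIso.hom_inv_id]
    have hw : IsIso (g ≫ f) := hEI b _
    have : (g ≫ f) ≫ (g ≫ f) = (g ≫ f) ≫ 𝟙 b := by
      rw [Category.comp_id, Category.assoc, ← Category.assoc f g f, hfg, Category.id_comp]
    exact (cancel_epi (g ≫ f)).mp this

lemma nonempty_iso_of_hom_hom (hEI : ∀ (x : D) (f : x ⟶ x), IsIso f)
    {x b : D} (f : x ⟶ b) (e : b ⟶ x) : Nonempty (x ≅ b) :=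
  ⟨@asIso _ _ _ _ f (isIso_of_hom_back hEI f e)⟩

lemma card_hom_right {x y : D} (i : x ≅ y) (z : D) :
    Nat.card (z ⟶ x) = Nat.card (z ⟶ y) := Nat.card_congr i.homToEquiv

lemma card_hom_left {x y : D} (i : x ≅ y) (z : D) :
    Nat.card (x ⟶ z) = Nat.card (y ⟶ z) := Nat.card_congr i.homFromEquiv

end EIBasic


section Cowt
variable (D : Type) [SmallCategory D] [Fintype D] [∀ x y : D, Finite (x ⟶ y)]

/-- strictly-below relation -/
def Prec (x b : D) : Prop := Nonempty (x ⟶ b) ∧ ¬ Nonempty (b ⟶ x)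

lemma prec_wf : WellFounded (Prec D) := by
  have : IsTrans D (Prec D) := ⟨by
    rintro x y z ⟨⟨f⟩, hf⟩ ⟨⟨g⟩, hg⟩
    exact ⟨⟨f ≫ g⟩, fun ⟨e⟩ => hg ⟨e ≫ f⟩⟩⟩
  have : IsIrrefl D (Prec D) := ⟨by rintro x ⟨⟨f⟩, hf⟩; exact hf ⟨f⟩⟩
  exact Finite.wellFounded_of_trans_of_irrefl _

/-- denominator: total number of maps into b from objects isomorphic to b -/
noncomputable def cden (b : D) : ℚ :=
  ∑ x ∈ Finset.univ.filter fun x => Nonempty (x ≅ b), (Nat.card (x ⟶ b) : ℚ)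

lemma cden_pos (b : D) : 0 < cden D b := by
  refine Finset.sum_pos' (fun i _ => by positivity) ⟨b, ?_, ?_⟩
  · simp [Finset.mem_filter]; exact ⟨Iso.refl b⟩
  · have : Nonempty (b ⟶ b) := ⟨𝟙 b⟩
    simpa using Nat.card_pos

noncomputable def cowt : D → ℚ :=
  (prec_wf D).fix fun b ih =>
    (1 - ∑ x ∈ (Finset.univ.filter fun x => Prec D x b).attach,
        ih x.1 (Finset.mem_filter.mp x.2).2 * (Nat.card ((x : D) ⟶ b) : ℚ)) / cden D b

lemma cowt_def (b : D) : cowt D b =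
    (1 - ∑ x ∈ Finset.univ.filter fun x => Prec D x b,
        cowt D x * (Nat.card (x ⟶ b) : ℚ)) / cden D b := by
  rw [cowt, WellFounded.fix_eq]
  congr 2
  exact Finset.sum_attach _ fun x => cowt D x * (Nat.card (x ⟶ b) : ℚ)

lemma cowt_const {b b' : D} (i : b ≅ b') : cowt D b = cowt D b' := by
  have hiso : ∀ x : D, Nonempty (x ≅ b) ↔ Nonempty (x ≅ b') :=
    fun x => ⟨fun ⟨j⟩ => ⟨j.trans i⟩, fun ⟨j⟩ => ⟨j.trans i.symm⟩⟩
  have hcard : ∀ x : D, Nat.card (x ⟶ b) = Nat.card (x ⟶ b') :=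
    fun x => Nat.card_congr i.homToEquiv
  have hprec : ∀ x : D, Prec D x b ↔ Prec D x b' := by
    intro x
    constructor
    · rintro ⟨⟨f⟩, hf⟩; exact ⟨⟨f ≫ i.hom⟩, fun ⟨e⟩ => hf ⟨i.hom ≫ e⟩⟩
    · rintro ⟨⟨f⟩, hf⟩; exact ⟨⟨f ≫ i.inv⟩, fun ⟨e⟩ => hf ⟨i.inv ≫ e⟩⟩
  rw [cowt_def, cowt_def]
  have hfilter : (Finset.univ.filter fun x => Prec D x b) =
      (Finset.univ.filter fun x => Prec D x b') := by
    ext x; simp [hprec x]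
  have hden : cden D b = cden D b' := by
    unfold cden
    rw [show (Finset.univ.filter fun x => Nonempty (x ≅ b)) =
        (Finset.univ.filter fun x => Nonempty (x ≅ b')) by ext x; simp [hiso x]]
    exact Finset.sum_congr rfl fun x _ => by rw [hcard x]
  rw [hfilter, hden,
    Finset.sum_congr rfl fun x (_ : x ∈ Finset.univ.filter fun x => Prec D x b') =>
      by rw [hcard x]]

lemma cowt_isCoweighting (hEI : ∀ (x : D) (f : x ⟶ x), IsIso f) :
    IsCoweighting D (cowt D) := by
  intro b
  rw [← Finset.sum_filter_add_sum_filter_not Finset.univ (fun x => Nonempty (x ≅ b))]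
  have h2 : ∑ x ∈ Finset.univ.filter fun x => ¬ Nonempty (x ≅ b),
      cowt D x * (Nat.card (x ⟶ b) : ℚ)
      = ∑ x ∈ Finset.univ.filter fun x => Prec D x b,
      cowt D x * (Nat.card (x ⟶ b) : ℚ) := by
    refine (Finset.sum_subset ?_ ?_).symm
    · intro x hx
      simp only [Finset.mem_filter, Finset.mem_univ, true_and] at hx ⊢
      rintro ⟨j⟩
      exact hx.2 ⟨j.inv⟩
    · intro x hx hx'
      simp only [Finset.mem_filter, Finset.mem_univ, true_and] at hx hx'
      have hempty : ¬ Nonempty (x ⟶ b) := by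
        intro ⟨f⟩
        rcases Classical.em (Nonempty (b ⟶ x)) with he | he
        · exact hx (nonempty_iso_of_hom_hom hEI f he.some)
        · exact hx' ⟨⟨f⟩, he⟩
      rw [not_nonempty_iff] at hempty
      simp [Nat.card_of_isEmpty]
  have h1 : ∑ x ∈ Finset.univ.filter fun x => Nonempty (x ≅ b),
      cowt D x * (Nat.card (x ⟶ b) : ℚ) = cowt D b * cden D b := by
    rw [cden, Finset.mul_sum]
    refine Finset.sum_congr rfl fun x hx => ?_
    simp only [Finset.mem_filter, Finset.mem_univ, true_and] at hx
    rw [cowt_const D hx.some]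
  rw [h1, h2, cowt_def, div_mul_cancel₀ _ (cden_pos D b).ne']
  ring

end Cowt


section Euler
variable {D : Type} [SmallCategory D] [Fintype D]

lemma sum_weighting_eq_sum_coweighting {w c : D → ℚ} (hw : IsWeighting D w)
    (hc : IsCoweighting D c) : ∑ b : D, w b = ∑ a : D, c a := by
  have : ∑ b : D, w b = ∑ b : D, (∑ a : D, c a * (Nat.card (a ⟶ b) : ℚ)) * w b := by
    refine Finset.sum_congr rfl fun b _ => ?_
    rw [hc b, one_mul]
  rw [this]
  simp only [Finset.sum_mul, mul_assoc]
  rw [Finset.sum_comm]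
  refine Finset.sum_congr rfl fun a _ => ?_
  rw [← Finset.mul_sum, hw a, mul_one]

lemma catEuler_eq_sum {w : D → ℚ} (hw : IsWeighting D w) (c : D → ℚ)
    (hc : IsCoweighting D c) : catEuler D = ∑ b : D, w b := by
  have h : ∃ k : D → ℚ, IsWeighting D k := ⟨w, hw⟩
  rw [catEuler, dif_pos h]
  rw [sum_weighting_eq_sum_coweighting h.choose_spec hc,
    sum_weighting_eq_sum_coweighting hw hc]

end Euler


section UnderStuff
variable {C : Type} [SmallCategory C] [∀ x y : C, Finite (x ⟶ y)] {a : C}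

lemma fsEq {Z : C → Prop} : ∀ {g₁ g₂ : CategoryTheory.ObjectProperty.FullSubcategory Z},
    g₁.obj = g₂.obj → g₁ = g₂ := by
  rintro ⟨o₁, p₁⟩ ⟨o₂, p₂⟩ (rfl : o₁ = o₂); rfl

instance underHomFinite (f g : Under a) : Finite (f ⟶ g) :=
  Finite.of_injective (fun h => h.right) fun h1 h2 e => by
    apply CommaMorphism.ext
    · exact Subsingleton.elim _ _
    · exact e

instance nonIsoUnderHomFinite (f g : NonIsoUnder C a) : Finite (f ⟶ g) :=
  Finite.of_injective (fun h : f ⟶ g => h.hom) fun _ _ e => InducedCategory.hom_ext e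

lemma nonIsoUnder_EI (hEI : ∀ (x : C) (f : x ⟶ x), IsIso f)
    (f : NonIsoUnder C a) (h : f ⟶ f) : IsIso h := by
  let G := ObjectProperty.ι (fun f : Under a => ¬ IsIso f.hom) ⋙ Under.forget a
  have : IsIso (G.map h) := hEI _ _
  exact isIso_of_reflects_iso h G

lemma heq_of_right_eq {f : NonIsoUnder C a} :
    ∀ {g₁ g₂ : NonIsoUnder C a} (_ : g₁ = g₂) (h₁ : f ⟶ g₁) (h₂ : f ⟶ g₂),
      HEq h₁.hom.right h₂.hom.right → HEq h₁ h₂ := by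
  rintro g₁ g₂ rfl h₁ h₂ hr
  rw [heq_iff_eq] at hr ⊢
  apply ObjectProperty.hom_ext
  apply CommaMorphism.ext
  · exact Subsingleton.elim _ _
  · exact hr

/-- morphisms out of `f` in `a//C` correspond to morphisms out of `cod f` in `C`. -/
noncomputable def sigmaHomEquiv (hEI : ∀ (x : C) (f : x ⟶ x), IsIso f)
    (f : NonIsoUnder C a) :
    (Σ g : NonIsoUnder C a, (f ⟶ g)) ≃ (Σ b' : C, (f.obj.right ⟶ b')) where
  toFun p := ⟨p.1.obj.right, p.2.hom.right⟩
  invFun q := ⟨⟨Under.mk (f.obj.hom ≫ q.2), fun hi =>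
      f.property (isIso_of_hom_back hEI f.obj.hom
        (q.2 ≫ @inv _ _ _ _ _ hi))⟩, ObjectProperty.homMk (Under.homMk q.2 rfl)⟩
  left_inv := by
    rintro ⟨g, h⟩
    have hw : f.obj.hom ≫ h.hom.right = g.obj.hom := Under.w h.hom
    have e1 : (⟨Under.mk (f.obj.hom ≫ h.hom.right), fun hi =>
        f.property (isIso_of_hom_back hEI f.obj.hom
          (h.hom.right ≫ @inv _ _ _ _ _ hi))⟩ : NonIsoUnder C a) = g := by
      apply fsEq
      rw [hw]
      rfl
    exact Sigma.ext e1 (heq_of_right_eq e1 _ _ HEq.rfl)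
  right_inv := by rintro ⟨b', t⟩; rfl

/-- objects of `a//C` correspond to non-isomorphisms out of `a`. -/
def nonIsoUnderEquiv : NonIsoUnder C a ≃ Σ b' : C, {t : a ⟶ b' // ¬ IsIso t} where
  toFun g := ⟨g.obj.right, g.obj.hom, g.property⟩
  invFun p := ⟨Under.mk p.2.1, p.2.2⟩
  left_inv g := rfl
  right_inv p := rfl

end UnderStuff

section Counting
variable {C : Type} [SmallCategory C] [Fintype C] [∀ x y : C, Finite (x ⟶ y)] {a : C}
variable [Fintype (NonIsoUnder C a)]

lemma kcod_isWeighting (hEI : ∀ (x : C) (f : x ⟶ x), IsIso f) (k : C → ℚ)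
    (hk : IsWeighting C k) :
    IsWeighting (NonIsoUnder C a) (fun g => k g.obj.right) := by
  intro f
  haveI : ∀ g : NonIsoUnder C a, Fintype (f ⟶ g) := fun g => Fintype.ofFinite _
  haveI : ∀ b' : C, Fintype (f.obj.right ⟶ b') := fun b' => Fintype.ofFinite _
  calc ∑ g : NonIsoUnder C a, (Nat.card (f ⟶ g) : ℚ) * k g.obj.right
      = ∑ g : NonIsoUnder C a, ∑ _h : (f ⟶ g), k g.obj.right := by
        refine Finset.sum_congr rfl fun g _ => ?_
        rw [Finset.sum_const, Nat.card_eq_fintype_card, Finset.card_univ, nsmul_eq_mul]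
    _ = ∑ p : Σ g : NonIsoUnder C a, (f ⟶ g), k p.1.obj.right := by
        rw [← Finset.univ_sigma_univ, Finset.sum_sigma]
    _ = ∑ q : Σ b' : C, (f.obj.right ⟶ b'), k q.1 :=
        Fintype.sum_equiv (sigmaHomEquiv hEI f) _ _ (fun p => rfl)
    _ = ∑ b' : C, ∑ _t : (f.obj.right ⟶ b'), k b' := by
        rw [← Finset.univ_sigma_univ, Finset.sum_sigma]
    _ = ∑ b' : C, (Nat.card (f.obj.right ⟶ b') : ℚ) * k b' := by
        refine Finset.sum_congr rfl fun b' _ => ?_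
        rw [Finset.sum_const, Nat.card_eq_fintype_card, Finset.card_univ, nsmul_eq_mul]
    _ = 1 := hk _

lemma sum_kcod (hEI : ∀ (x : C) (f : x ⟶ x), IsIso f) (k : C → ℚ) :
    ∑ g : NonIsoUnder C a, k g.obj.right
      = ∑ b' ∈ Finset.univ.filter (fun b' => ¬ Nonempty (a ≅ b')),
          (Nat.card (a ⟶ b') : ℚ) * k b' := by
  haveI : ∀ b' : C, Fintype {t : a ⟶ b' // ¬ IsIso t} := fun _ => Fintype.ofFinite _
  calc ∑ g : NonIsoUnder C a, k g.obj.right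
      = ∑ p : Σ b' : C, {t : a ⟶ b' // ¬ IsIso t}, k p.1 :=
        Fintype.sum_equiv nonIsoUnderEquiv _ _ (fun g => rfl)
    _ = ∑ b' : C, (Nat.card {t : a ⟶ b' // ¬ IsIso t} : ℚ) * k b' := by
        rw [← Finset.univ_sigma_univ, Finset.sum_sigma]
        refine Finset.sum_congr rfl fun b' _ => ?_
        show (∑ _s : {t : a ⟶ b' // ¬ IsIso t}, k b') = _
        rw [Finset.sum_const, Nat.card_eq_fintype_card, Finset.card_univ, nsmul_eq_mul]
    _ = ∑ b' ∈ Finset.univ.filter (fun b' => ¬ Nonempty (a ≅ b')),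
          (Nat.card {t : a ⟶ b' // ¬ IsIso t} : ℚ) * k b' := by
        refine (Finset.sum_subset (Finset.filter_subset _ _) ?_).symm
        intro b' _ hb'
        simp only [Finset.mem_filter, Finset.mem_univ, true_and, not_not] at hb'
        have : IsEmpty {t : a ⟶ b' // ¬ IsIso t} :=
          ⟨fun ⟨t, ht⟩ => ht (isIso_of_hom_back hEI t hb'.some.inv)⟩
        rw [Nat.card_of_isEmpty]
        simp
    _ = ∑ b' ∈ Finset.univ.filter (fun b' => ¬ Nonempty (a ≅ b')),
          (Nat.card (a ⟶ b') : ℚ) * k b' := by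
        refine Finset.sum_congr rfl fun b' hb' => ?_
        simp only [Finset.mem_filter, Finset.mem_univ, true_and] at hb'
        rw [Nat.card_congr (Equiv.subtypeUnivEquiv fun t ht => hb' ⟨@asIso _ _ _ _ t ht⟩)]

end Counting

open CategoryTheory in
/-- In a finite EI-category, the weighting constant on isomorphism classes is given by
`k a = -χ̃(a//C) / (|[a]| ⬝ |C(a)|)`, and consequently
`χ(C) = Σ_a -χ̃(a//C) / (|[a]| ⬝ |C(a)|)` (which is the sum over isomorphism classes of
`-χ̃(a//C)/|C(a)|`). -/
theorem weighting_eq_nonIsoUnder_euler (C : Type) [SmallCategory C] [Fintype C]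
    [∀ a b : C, Finite (a ⟶ b)] (hEI : ∀ (a : C) (f : a ⟶ a), IsIso f)
    [∀ a : C, Fintype (NonIsoUnder C a)]
    (k : C → ℚ) (hk : IsWeighting C k) (hconst : ConstOnIso C k) :
    (∀ a : C, k a = -(catEuler (NonIsoUnder C a) - 1) /
        ((Fintype.card {b : C // Nonempty (a ≅ b)} : ℚ) * (Nat.card (a ⟶ a) : ℚ))) ∧
    catEuler C = ∑ a : C, -(catEuler (NonIsoUnder C a) - 1) /
        ((Fintype.card {b : C // Nonempty (a ≅ b)} : ℚ) * (Nat.card (a ⟶ a) : ℚ)) := by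
  have main : ∀ a : C, k a = -(catEuler (NonIsoUnder C a) - 1) /
      ((Fintype.card {b : C // Nonempty (a ≅ b)} : ℚ) * (Nat.card (a ⟶ a) : ℚ)) := by
    intro a
    set m : ℚ := (Fintype.card {b : C // Nonempty (a ≅ b)} : ℚ) * (Nat.card (a ⟶ a) : ℚ)
      with hm
    have hEI' := nonIsoUnder_EI (C := C) (a := a) hEI
    have hcat : catEuler (NonIsoUnder C a) = ∑ g : NonIsoUnder C a, k g.obj.right :=
      catEuler_eq_sum (kcod_isWeighting hEI k hk) _ (cowt_isCoweighting _ hEI')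
    rw [sum_kcod hEI k] at hcat
    have hsplit := hk a
    rw [← Finset.sum_filter_add_sum_filter_not Finset.univ
      (fun b' => Nonempty (a ≅ b'))] at hsplit
    have hM : ∑ b' ∈ Finset.univ.filter (fun b' => Nonempty (a ≅ b')),
        (Nat.card (a ⟶ b') : ℚ) * k b' = m * k a := by
      have hterm : ∀ b' ∈ Finset.univ.filter (fun b' => Nonempty (a ≅ b')),
          (Nat.card (a ⟶ b') : ℚ) * k b' = (Nat.card (a ⟶ a) : ℚ) * k a := by
        intro b' hb'
        simp only [Finset.mem_filter, Finset.mem_univ, true_and] at hb'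
        obtain ⟨i⟩ := hb'
        rw [← hconst a b' ⟨i⟩, ← card_hom_right i a]
      rw [Finset.sum_congr rfl hterm, Finset.sum_const, ← Fintype.card_subtype, hm,
        nsmul_eq_mul]
      ring
    rw [hM, ← hcat] at hsplit
    have hm1 : (0 : ℚ) < (Fintype.card {b : C // Nonempty (a ≅ b)} : ℚ) := by
      have : 0 < Fintype.card {b : C // Nonempty (a ≅ b)} :=
        Fintype.card_pos_iff.mpr ⟨⟨a, ⟨Iso.refl a⟩⟩⟩
      exact_mod_cast this
    have hm2 : (0 : ℚ) < (Nat.card (a ⟶ a) : ℚ) := by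
      have : Nonempty (a ⟶ a) := ⟨𝟙 a⟩
      exact_mod_cast Nat.card_pos
    have hmpos : 0 < m := by rw [hm]; exact mul_pos hm1 hm2
    rw [eq_div_iff hmpos.ne']
    linarith
  refine ⟨main, ?_⟩
  have h := catEuler_eq_sum hk (cowt C) (cowt_isCoweighting C hEI)
  rw [h]
  exact Finset.sum_congr rfl fun a _ => main a
end

section
/- Let S be a finite poset. Then the Euler characteristic of S equals Σ_{a ∈ S} −χ̃(S_{<a}), where S_{<a} = {x ∈ S : x < a}, and also equals Σ_{a ∈ S} −χ̃(S_{>a}). Here χ̃ denotes the reduced Euler characteristic of the order complex, with χ̃(∅) = −1. -/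
open scoped Classical

open scoped Classical in
/-- The Euler characteristic of the order complex of a finite poset:
the alternating sum over nonempty chains. -/
noncomputable def posetEuler (S : Type) [PartialOrder S] [Fintype S] : ℤ :=
  ∑ s ∈ Finset.univ.powerset.filter
      (fun s : Finset S => s.Nonempty ∧ IsChain (· ≤ ·) (s : Set S)),
    (-1 : ℤ) ^ (s.card - 1)

open Finset

/-- Sum over all chains (including the empty chain) of `(-1)^card`. -/
lemma sum_all_chains (S : Type) [PartialOrder S] [Fintype S] :
    ∑ s ∈ Finset.univ.powerset.filter
        (fun s : Finset S => IsChain (· ≤ ·) (s : Set S)), (-1 : ℤ) ^ s.card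
      = 1 - posetEuler S := by
  classical
  have h0 : (∅ : Finset S) ∈ Finset.univ.powerset.filter
      (fun s : Finset S => IsChain (· ≤ ·) (s : Set S)) := by
    simp [IsChain, Set.Pairwise]
  rw [← Finset.add_sum_erase _ _ h0]
  have herase : (Finset.univ.powerset.filter
      (fun s : Finset S => IsChain (· ≤ ·) (s : Set S))).erase ∅
      = Finset.univ.powerset.filter
        (fun s : Finset S => s.Nonempty ∧ IsChain (· ≤ ·) (s : Set S)) := by
    ext s
    simp only [Finset.mem_erase, Finset.mem_filter, Finset.mem_powerset,
      Finset.nonempty_iff_ne_empty]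
    tauto
  rw [herase]
  have hsum : ∑ s ∈ Finset.univ.powerset.filter
        (fun s : Finset S => s.Nonempty ∧ IsChain (· ≤ ·) (s : Set S)),
        (-1 : ℤ) ^ s.card = - posetEuler S := by
    rw [posetEuler, ← Finset.sum_neg_distrib]
    apply Finset.sum_congr rfl
    intro s hs
    simp only [Finset.mem_filter] at hs
    have hc : 1 ≤ s.card := Finset.card_pos.mpr hs.2.1
    obtain ⟨m, hm⟩ : ∃ m, s.card = m + 1 := ⟨s.card - 1, by omega⟩
    rw [hm]
    simp [pow_succ]
  rw [hsum]
  simp [sub_eq_add_neg]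

/-- Sum over chains contained in a downward-closed-by-`p` set equals
`1 - posetEuler` of the subtype. -/
lemma sum_chains_subset (S : Type) [PartialOrder S] [Fintype S] (p : S → Prop) :
    ∑ c ∈ Finset.univ.powerset.filter
        (fun c : Finset S => (∀ x ∈ c, p x) ∧ IsChain (· ≤ ·) (c : Set S)),
      (-1 : ℤ) ^ c.card = 1 - posetEuler {x : S // p x} := by
  classical
  rw [← sum_all_chains]
  refine Finset.sum_nbij' (fun c => c.subtype p)
    (fun c => c.map (Function.Embedding.subtype p)) ?_ ?_ ?_ ?_ ?_
  · intro c hc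
    simp only [Finset.mem_filter, Finset.mem_powerset] at hc ⊢
    refine ⟨Finset.subset_univ _, ?_⟩
    intro u hu v hv huv
    simp only [Finset.mem_coe, Finset.mem_subtype] at hu hv
    exact hc.2.2 hu hv (fun h => huv (Subtype.ext h))
  · intro c hc
    simp only [Finset.mem_filter, Finset.mem_powerset] at hc ⊢
    refine ⟨Finset.subset_univ _, ?_, ?_⟩
    · intro x hx
      simp only [Finset.mem_map, Function.Embedding.coe_subtype] at hx
      obtain ⟨y, _, rfl⟩ := hx
      exact y.2
    · intro u hu v hv huv
      simp only [Finset.mem_coe, Finset.mem_map,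
        Function.Embedding.coe_subtype] at hu hv
      obtain ⟨y, hy, rfl⟩ := hu
      obtain ⟨z, hz, rfl⟩ := hv
      exact hc.2 hy hz (fun h => huv (congrArg _ h))
  · intro c hc
    simp only [Finset.mem_filter, Finset.mem_powerset] at hc
    show (Finset.subtype p c).map (Function.Embedding.subtype p) = c
    rw [Finset.subtype_map, Finset.filter_true_of_mem hc.2.1]
  · intro c hc
    show Finset.subtype p (c.map (Function.Embedding.subtype p)) = c
    apply Finset.map_injective (Function.Embedding.subtype p)
    rw [Finset.subtype_map]
    apply Finset.filter_true_of_mem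
    intro x hx
    simp only [Finset.mem_map, Function.Embedding.coe_subtype] at hx
    obtain ⟨y, _, rfl⟩ := hx
    exact y.2
  · intro c hc
    simp only [Finset.mem_filter, Finset.mem_powerset] at hc
    congr 1
    rw [Finset.card_subtype, Finset.filter_true_of_mem hc.2.1]

/-- Every nonempty finite chain has a greatest element. -/
lemma chain_exists_greatest {S : Type} [PartialOrder S] {s : Finset S}
    (hne : s.Nonempty) (hch : IsChain (· ≤ ·) (s : Set S)) :
    ∃ a ∈ s, ∀ x ∈ s, x ≤ a := by
  obtain ⟨a, ha, hmax⟩ := Set.Finite.exists_maximalFor id (s : Set S)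
    s.finite_toSet (by exact_mod_cast hne)
  refine ⟨a, ha, fun x hx => ?_⟩
  by_cases hxa : x = a
  · exact hxa.le
  · rcases hch hx ha hxa with h | h
    · exact h
    · exact hmax hx h

/-- Every nonempty finite chain has a least element. -/
lemma chain_exists_least {S : Type} [PartialOrder S] {s : Finset S}
    (hne : s.Nonempty) (hch : IsChain (· ≤ ·) (s : Set S)) :
    ∃ a ∈ s, ∀ x ∈ s, a ≤ x := by
  obtain ⟨a, ha, hmin⟩ := Set.Finite.exists_minimalFor id (s : Set S)
    s.finite_toSet (by exact_mod_cast hne)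
  refine ⟨a, ha, fun x hx => ?_⟩
  by_cases hxa : x = a
  · exact hxa.ge
  · rcases hch hx ha hxa with h | h
    · exact hmin hx h
    · exact h

lemma posetEuler_localMax (S : Type) [PartialOrder S] [Fintype S] :
    posetEuler S = ∑ a : S, (1 - posetEuler {x : S // x < a}) := by
  classical
  have key : ∀ s ∈ Finset.univ.powerset.filter
      (fun s : Finset S => s.Nonempty ∧ IsChain (· ≤ ·) (s : Set S)),
      ∑ a : S, (if a ∈ s ∧ ∀ x ∈ s, x ≤ a then ((-1 : ℤ) ^ (s.card - 1)) else 0)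
        = (-1 : ℤ) ^ (s.card - 1) := by
    intro s hs
    simp only [Finset.mem_filter] at hs
    obtain ⟨a₀, ha₀, hmax⟩ := chain_exists_greatest hs.2.1 hs.2.2
    have hfilt : Finset.univ.filter (fun a => a ∈ s ∧ ∀ x ∈ s, x ≤ a) = {a₀} := by
      ext b
      simp only [Finset.mem_filter, Finset.mem_univ, true_and, Finset.mem_singleton]
      constructor
      · rintro ⟨hb, hball⟩
        exact le_antisymm (hmax b hb) (hball a₀ ha₀)
      · rintro rfl
        exact ⟨ha₀, hmax⟩
    rw [← Finset.sum_filter, hfilt, Finset.sum_singleton]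
  calc posetEuler S
      = ∑ s ∈ Finset.univ.powerset.filter
          (fun s : Finset S => s.Nonempty ∧ IsChain (· ≤ ·) (s : Set S)),
          ∑ a : S, (if a ∈ s ∧ ∀ x ∈ s, x ≤ a then ((-1 : ℤ) ^ (s.card - 1)) else 0) := by
        rw [posetEuler]
        exact (Finset.sum_congr rfl key).symm
    _ = ∑ a : S, ∑ s ∈ Finset.univ.powerset.filter
          (fun s : Finset S => s.Nonempty ∧ IsChain (· ≤ ·) (s : Set S)),
          (if a ∈ s ∧ ∀ x ∈ s, x ≤ a then ((-1 : ℤ) ^ (s.card - 1)) else 0) :=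
        Finset.sum_comm
    _ = ∑ a : S, (1 - posetEuler {x : S // x < a}) := by
        apply Finset.sum_congr rfl
        intro a _
        rw [← Finset.sum_filter, ← sum_chains_subset S (fun x => x < a)]
        refine Finset.sum_nbij' (fun s => s.erase a) (fun c => insert a c)
          ?_ ?_ ?_ ?_ ?_
        · intro s hs
          simp only [Finset.mem_filter, Finset.mem_powerset] at hs ⊢
          obtain ⟨⟨-, hne, hch⟩, has, hle⟩ := hs
          refine ⟨Finset.subset_univ _, ?_, ?_⟩
          · intro x hx
            rw [Finset.mem_erase] at hx
            exact lt_of_le_of_ne (hle x hx.2) hx.1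
          · exact hch.mono (by exact_mod_cast Finset.erase_subset a s)
        · intro c hc
          simp only [Finset.mem_filter, Finset.mem_powerset] at hc ⊢
          obtain ⟨-, hlt, hch⟩ := hc
          refine ⟨⟨Finset.subset_univ _, Finset.insert_nonempty a c, ?_⟩, ?_, ?_⟩
          · rw [Finset.coe_insert]
            exact hch.insert (fun b hb _ => Or.inr (hlt b hb).le)
          · exact Finset.mem_insert_self a c
          · intro x hx
            rcases Finset.mem_insert.mp hx with rfl | hx
            · exact le_rfl
            · exact (hlt x hx).le
        · intro s hs
          simp only [Finset.mem_filter] at hs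
          exact Finset.insert_erase hs.2.1
        · intro c hc
          simp only [Finset.mem_filter, Finset.mem_powerset] at hc
          exact Finset.erase_insert (fun h => lt_irrefl a (hc.2.1 a h))
        · intro s hs
          simp only [Finset.mem_filter] at hs
          rw [Finset.card_erase_of_mem hs.2.1]

lemma posetEuler_localMin (S : Type) [PartialOrder S] [Fintype S] :
    posetEuler S = ∑ a : S, (1 - posetEuler {x : S // a < x}) := by
  classical
  have key : ∀ s ∈ Finset.univ.powerset.filter
      (fun s : Finset S => s.Nonempty ∧ IsChain (· ≤ ·) (s : Set S)),
      ∑ a : S, (if a ∈ s ∧ ∀ x ∈ s, a ≤ x then ((-1 : ℤ) ^ (s.card - 1)) else 0)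
        = (-1 : ℤ) ^ (s.card - 1) := by
    intro s hs
    simp only [Finset.mem_filter] at hs
    obtain ⟨a₀, ha₀, hmin⟩ := chain_exists_least hs.2.1 hs.2.2
    have hfilt : Finset.univ.filter (fun a => a ∈ s ∧ ∀ x ∈ s, a ≤ x) = {a₀} := by
      ext b
      simp only [Finset.mem_filter, Finset.mem_univ, true_and, Finset.mem_singleton]
      constructor
      · rintro ⟨hb, hball⟩
        exact le_antisymm (hball a₀ ha₀) (hmin b hb)
      · rintro rfl
        exact ⟨ha₀, hmin⟩
    rw [← Finset.sum_filter, hfilt, Finset.sum_singleton]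
  calc posetEuler S
      = ∑ s ∈ Finset.univ.powerset.filter
          (fun s : Finset S => s.Nonempty ∧ IsChain (· ≤ ·) (s : Set S)),
          ∑ a : S, (if a ∈ s ∧ ∀ x ∈ s, a ≤ x then ((-1 : ℤ) ^ (s.card - 1)) else 0) := by
        rw [posetEuler]
        exact (Finset.sum_congr rfl key).symm
    _ = ∑ a : S, ∑ s ∈ Finset.univ.powerset.filter
          (fun s : Finset S => s.Nonempty ∧ IsChain (· ≤ ·) (s : Set S)),
          (if a ∈ s ∧ ∀ x ∈ s, a ≤ x then ((-1 : ℤ) ^ (s.card - 1)) else 0) :=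
        Finset.sum_comm
    _ = ∑ a : S, (1 - posetEuler {x : S // a < x}) := by
        apply Finset.sum_congr rfl
        intro a _
        rw [← Finset.sum_filter, ← sum_chains_subset S (fun x => a < x)]
        refine Finset.sum_nbij' (fun s => s.erase a) (fun c => insert a c)
          ?_ ?_ ?_ ?_ ?_
        · intro s hs
          simp only [Finset.mem_filter, Finset.mem_powerset] at hs ⊢
          obtain ⟨⟨-, hne, hch⟩, has, hle⟩ := hs
          refine ⟨Finset.subset_univ _, ?_, ?_⟩
          · intro x hx
            rw [Finset.mem_erase] at hx
            exact lt_of_le_of_ne (hle x hx.2) (Ne.symm hx.1)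
          · exact hch.mono (by exact_mod_cast Finset.erase_subset a s)
        · intro c hc
          simp only [Finset.mem_filter, Finset.mem_powerset] at hc ⊢
          obtain ⟨-, hlt, hch⟩ := hc
          refine ⟨⟨Finset.subset_univ _, Finset.insert_nonempty a c, ?_⟩, ?_, ?_⟩
          · rw [Finset.coe_insert]
            exact hch.insert (fun b hb _ => Or.inl (hlt b hb).le)
          · exact Finset.mem_insert_self a c
          · intro x hx
            rcases Finset.mem_insert.mp hx with rfl | hx
            · exact le_rfl
            · exact (hlt x hx).le
        · intro s hs
          simp only [Finset.mem_filter] at hs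
          exact Finset.insert_erase hs.2.1
        · intro c hc
          simp only [Finset.mem_filter, Finset.mem_powerset] at hc
          exact Finset.erase_insert (fun h => lt_irrefl a (hc.2.1 a h))
        · intro s hs
          simp only [Finset.mem_filter] at hs
          rw [Finset.card_erase_of_mem hs.2.1]

/-- The Euler characteristic of a finite poset is the sum over its elements of the
negated reduced Euler characteristics of the strict down-sets, and likewise of the
strict up-sets. -/
theorem posetEuler_eq_sum_local (S : Type) [PartialOrder S] [Fintype S] :
    posetEuler S = ∑ a : S, -(posetEuler {x : S // x < a} - 1) ∧
    posetEuler S = ∑ a : S, -(posetEuler {x : S // a < x} - 1) := by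
  constructor
  · rw [posetEuler_localMax]
    apply Finset.sum_congr rfl
    intro a _
    ring
  · rw [posetEuler_localMin]
    apply Finset.sum_congr rfl
    intro a _
    ring
end

section
/- Let G be a finite group, p a prime, and H a nonidentity p-subgroup of G. In the orbit category O_G of p-subgroups of G, for every subgroup L with H ≤ L ≤ N_G(H) and L a p-group, the inclusion morphism H → L (the class of 1 in N_G(H,L)/L) is an initial object of the category of pairs (morphism gK: H → K in O_G such that L/H is contained in N_{gKg⁻¹}(H)/H). In particular, if a morphism gK: H → K in O_G satisfies L^g ≤ K, then gK: H → K factors through the inclusion H → L via the morphism gK: L → K. -/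
open scoped Classical

open CategoryTheory

/-- The orbit category of `P`: objects are the subgroups of `P` (type synonym). -/
def OrbitCat (P : Type) [Group P] : Type := Subgroup P

/-- The underlying subgroup of an object of the orbit category. -/
def OrbitCat.toSub {P : Type} [Group P] (H : OrbitCat P) : Subgroup P := H

/-- Morphisms `H → K` in the orbit category: cosets `gK ∈ P/K` with `g⁻¹Hg ≤ K`. -/
def OrbitHom (P : Type) [Group P] (H K : Subgroup P) : Type :=
  {x : P ⧸ K // ∀ g : P, (g : P ⧸ K) = x → ∀ h ∈ H, g⁻¹ * h * g ∈ K}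

/-- The identity morphism in the orbit category, the coset of `1`. -/
def OrbitId (P : Type) [Group P] (H : Subgroup P) : OrbitHom P H H :=
  ⟨((1 : P) : P ⧸ H), by
    intro g hg h hh
    have h1 : g⁻¹ * (1 : P) ∈ H := QuotientGroup.eq.mp hg
    have hgH : g ∈ H := by simpa using (inv_mem h1)
    exact mul_mem (mul_mem (inv_mem hgH) hh) hgH⟩

/-- Composition in the orbit category, induced by multiplication in `P`. -/
noncomputable def OrbitComp (P : Type) [Group P] (H K L : Subgroup P)
    (f : OrbitHom P H K) (g : OrbitHom P K L) : OrbitHom P H L :=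
  ⟨((f.1.out * g.1.out : P) : P ⧸ L), by
    intro g' hg' h hh
    have ha := f.2 f.1.out f.1.out_eq
    have hb := g.2 g.1.out g.1.out_eq
    have hl : g'⁻¹ * (f.1.out * g.1.out) ∈ L := QuotientGroup.eq.mp hg'
    have key : g'⁻¹ * h * g' =
        (g'⁻¹ * (f.1.out * g.1.out)) *
          ((g.1.out)⁻¹ * ((f.1.out)⁻¹ * h * f.1.out) * g.1.out) *
          (g'⁻¹ * (f.1.out * g.1.out))⁻¹ := by group
    rw [key]
    exact mul_mem (mul_mem hl (hb _ (ha h hh))) (inv_mem hl)⟩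

/-- The inclusion morphism `H → L` in the orbit category, for `H ≤ L`:
the class of `1` in `N_G(H,L)/L`. -/
def OrbitInc (G : Type) [Group G] (H L : Subgroup G) (hHL : H ≤ L) : OrbitHom G H L :=
  ⟨((1 : G) : G ⧸ L), by
    intro g hg h hh
    have h1 : g⁻¹ * (1 : G) ∈ L := QuotientGroup.eq.mp hg
    have hgL : g ∈ L := by simpa using (inv_mem h1)
    exact mul_mem (mul_mem (inv_mem hgL) (hHL hh)) hgL⟩

lemma comp_inc_fst (G : Type) [Group G] (H L K : Subgroup G) (hHL : H ≤ L)
    (m : OrbitHom G L K) :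
    (OrbitComp G H L K (OrbitInc G H L hHL) m).1 = m.1 := by
  have hout : ((OrbitInc G H L hHL).1.out : G) ∈ L := by
    have h1 : ((OrbitInc G H L hHL).1.out)⁻¹ * (1 : G) ∈ L :=
      QuotientGroup.eq.mp ((OrbitInc G H L hHL).1.out_eq)
    simpa using (inv_mem h1)
  show (((OrbitInc G H L hHL).1.out * m.1.out : G) : G ⧸ K) = m.1
  rw [← m.1.out_eq]
  refine QuotientGroup.eq.mpr ?_
  have := m.2 m.1.out m.1.out_eq _ (inv_mem hout)
  simpa [mul_assoc] using this

/-- For a nonidentity `p`-subgroup `H` of `G` and a `p`-group `L` with `H ≤ L ≤ N_G(H)`,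
the inclusion `H → L` is initial among morphisms `gK : H → K` of the orbit category with
`L^g ≤ K`: such a morphism factors uniquely through the inclusion, and in particular for
any representative `g` the factoring morphism `L → K` can be taken to be the coset `gK`. -/
theorem orbit_inclusion_initial (p : ℕ) [Fact p.Prime] (G : Type) [Group G] [Fintype G]
    (H L : Subgroup G) (hH : IsPGroup p H) (hHne : H ≠ ⊥) (hL : IsPGroup p L)
    (hHL : H ≤ L) (hLN : L ≤ Subgroup.normalizer (H : Set G)) :
    ∀ K : Subgroup G, IsPGroup p K → ∀ f : OrbitHom G H K,
      (∀ g : G, (g : G ⧸ K) = f.1 → ∀ l ∈ L, g⁻¹ * l * g ∈ K) →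
      (∃! m : OrbitHom G L K, OrbitComp G H L K (OrbitInc G H L hHL) m = f) ∧
      (∀ g : G, (g : G ⧸ K) = f.1 →
        ∃ m : OrbitHom G L K, m.1 = (g : G ⧸ K) ∧
          OrbitComp G H L K (OrbitInc G H L hHL) m = f) := by
  intro K hK f hf
  constructor
  · refine ⟨⟨f.1, hf⟩, ?_, ?_⟩
    · exact Subtype.ext (comp_inc_fst G H L K hHL _)
    · intro m hm
      exact Subtype.ext (by rw [← comp_inc_fst G H L K hHL m, hm])
  · intro g hg
    exact ⟨⟨f.1, hf⟩, hg.symm, Subtype.ext (comp_inc_fst G H L K hHL _)⟩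
end
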